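/- Let (M,ω) be a non-compact symplectic manifold with H¹(M,ℝ)=0 and with exact symplectic form ω. The cohomology class in H²(Diff(M,ω),ℝ) of the 2-cocycle C_{x₀}(g₁,g₂)=∫_{x₀}^{g₂x₀}(g₁*ω₁−ω₁) does not depend on the choice of the base point x₀∈M nor on the choice of the 1-form ω₁ with dω₁=ω; explicitly, for two points x₁,x₂∈M one has C_{x₁}−C_{x₂}=Da, where a is the 1-cochain a(g)=∫_{x₁}^{x₂}(g*ω₁−ω₁). -/

import Mathlib

open scoped BigOperators

namespace SymplCocycle

variable {M V : Type*} [AddCommGroup V] [Module ℝ V]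

abbrev Form (M V : Type*) [AddCommGroup V] [Module ℝ V] (k : ℕ) :=
  M → V [⋀^Fin k]→ₗ[ℝ] ℝ

noncomputable def ofFun (f : M → ℝ) : Form M V 0 :=
  fun x => AlternatingMap.constOfIsEmpty ℝ V (Fin 0) (f x)

noncomputable def wedgeAlt {p q : ℕ} (α : V [⋀^Fin p]→ₗ[ℝ] ℝ) (β : V [⋀^Fin q]→ₗ[ℝ] ℝ) :
    V [⋀^Fin (p + q)]→ₗ[ℝ] ℝ :=
  AlternatingMap.domDomCongr finSumFinEquiv
    ((LinearMap.mul' ℝ ℝ).compAlternatingMap (α.domCoprod β))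

noncomputable def wedge {p q : ℕ} (α : Form M V p) (β : Form M V q) : Form M V (p + q) :=
  fun x => wedgeAlt (α x) (β x)

noncomputable def wpow (ω : Form M V 2) : (n : ℕ) → Form M V (2 * n)
  | 0 => ofFun fun _ => (1 : ℝ)
  | n + 1 => wedge (wpow ω n) ω

def castF {k l : ℕ} (h : k = l) (α : Form M V k) : Form M V l := h ▸ α

noncomputable def iprod (ω : Form M V 2) (X : M → V) : Form M V 1 :=
  fun x => (ω x).curryLeft (X x)

/-- An abstract "differential calculus" on `M`, with all tangent spaces identified with `V`:
it records which functions/maps/forms/vector fields are smooth, the tangent maps of smooth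
self-maps, the exterior derivative, and the Lie bracket of vector fields, together with their
standard properties.  The axiom `apply_eq_of_d_ofFun_eq_zero` encodes connectedness of `M`. -/
structure DiffCalc (M V : Type*) [AddCommGroup V] [Module ℝ V] where
  SmoothFun : (M → ℝ) → Prop
  SmoothMap : (M → M) → Prop
  SmoothForm : ∀ {k : ℕ}, Form M V k → Prop
  SmoothVF : (M → V) → Prop
  Tmap : (M → M) → M → V →ₗ[ℝ] V
  d : ∀ {k : ℕ}, Form M V k → Form M V (k + 1)
  lieVF : (M → V) → (M → V) → (M → V)
  smoothMap_id : SmoothMap id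
  smoothMap_comp : ∀ {f g : M → M}, SmoothMap f → SmoothMap g → SmoothMap (f ∘ g)
  smoothFun_comp : ∀ {f : M → ℝ} {g : M → M}, SmoothFun f → SmoothMap g → SmoothFun (f ∘ g)
  smoothFun_const : ∀ c : ℝ, SmoothFun fun _ => c
  smoothForm_ofFun : ∀ {f : M → ℝ}, SmoothFun f → SmoothForm (ofFun f)
  smoothFun_of_ofFun : ∀ {f : M → ℝ}, SmoothForm (ofFun f) → SmoothFun f
  smoothForm_add : ∀ {k} {α β : Form M V k}, SmoothForm α → SmoothForm β → SmoothForm (α + β)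
  smoothForm_neg : ∀ {k} {α : Form M V k}, SmoothForm α → SmoothForm (-α)
  smoothForm_wedge : ∀ {p q} {α : Form M V p} {β : Form M V q},
    SmoothForm α → SmoothForm β → SmoothForm (wedge α β)
  smoothForm_d : ∀ {k} {α : Form M V k}, SmoothForm α → SmoothForm (d α)
  smoothForm_pull : ∀ {k} {α : Form M V k} {g : M → M}, SmoothMap g → SmoothForm α →
    SmoothForm fun x => (α (g x)).compLinearMap (Tmap g x)
  smoothVF_lie : ∀ {X Y : M → V}, SmoothVF X → SmoothVF Y → SmoothVF (lieVF X Y)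
  lieVF_antisymm : ∀ X Y : M → V, lieVF X Y = -lieVF Y X
  Tmap_id : ∀ x : M, Tmap id x = LinearMap.id
  Tmap_comp : ∀ {f g : M → M} (x : M), SmoothMap f → SmoothMap g →
    Tmap (f ∘ g) x = (Tmap f (g x)).comp (Tmap g x)
  d_add : ∀ {k} (α β : Form M V k), d (α + β) = d α + d β
  d_d : ∀ {k} (α : Form M V k), SmoothForm α → d (d α) = 0
  d_pull : ∀ {k} {g : M → M} (α : Form M V k), SmoothMap g → SmoothForm α →
    d (fun x => (α (g x)).compLinearMap (Tmap g x)) =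
      fun x => (d α (g x)).compLinearMap (Tmap g x)
  apply_eq_of_d_ofFun_eq_zero : ∀ {f : M → ℝ}, SmoothFun f → d (ofFun f) = 0 →
    ∀ x y : M, f x = f y

/-- Pullback of a `k`-form along a (smooth) map. -/
def DiffCalc.pull (F : DiffCalc M V) {k : ℕ} (g : M → M) (α : Form M V k) : Form M V k :=
  fun x => (α (g x)).compLinearMap (F.Tmap g x)

/-- The symplectomorphisms (diffeomorphisms preserving the `2`-form `ω`) of `M`. -/
def DiffCalc.IsSymplecto (F : DiffCalc M V) (ω : Form M V 2) (g : Equiv.Perm M) : Prop :=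
  F.SmoothMap g ∧ F.SmoothMap g.symm ∧ F.pull g ω = ω

/-- Pointwise nondegeneracy of a `2`-form. -/
def Nondegenerate (ω : Form M V 2) : Prop :=
  ∀ x : M, ∀ u : V, u ≠ 0 → ∃ v : V, ω x ![u, v] ≠ 0

/-- A `2`-form is symplectic if it is smooth, closed and nondegenerate. -/
def DiffCalc.IsSymplectic (F : DiffCalc M V) (ω : Form M V 2) : Prop :=
  F.SmoothForm ω ∧ F.d ω = 0 ∧ Nondegenerate ω

/-- `X` is a locally Hamiltonian vector field: `i_X ω` is closed. -/
def DiffCalc.IsLocHam (F : DiffCalc M V) (ω : Form M V 2) (X : M → V) : Prop :=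
  F.SmoothVF X ∧ F.SmoothForm (iprod ω X) ∧ F.d (iprod ω X) = 0

/-- `X` is a Hamiltonian vector field: `i_X ω` is exact. -/
def DiffCalc.IsHam (F : DiffCalc M V) (ω : Form M V 2) (X : M → V) : Prop :=
  F.SmoothVF X ∧ F.SmoothForm (iprod ω X) ∧
    ∃ f : M → ℝ, F.SmoothFun f ∧ F.d (ofFun f) = iprod ω X

/-- `H¹(M,ℝ) = 0`: every closed smooth `1`-form is the differential of a smooth function. -/
def DiffCalc.H1Trivial (F : DiffCalc M V) : Prop :=
  ∀ α : Form M V 1, F.SmoothForm α → F.d α = 0 →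
    ∃ f : M → ℝ, F.SmoothFun f ∧ F.d (ofFun f) = α

/-!
The `1`-forms `θ_g = g*ω₁ − ω₁` satisfy the cocycle identity
`θ_{g₁g₂} = g₂*θ_{g₁} + θ_{g₂}`; since every `θ_g` is exact, line integrals of `θ_g` are
differences of values of a primitive, unique up to a constant on the connected manifold `M`.
Fixing a primitive `f_g` of each `θ_g`, the identity shows that `f_{g₁} ∘ g₂ + f_{g₂}` is a
primitive of `θ_{g₁g₂}`, and moving the base point changes `C` by the coboundary of
`a(g) = f_g x₂ − f_g x₁`. Two primitives `ω₁, ω₁'` of `ω` differ by a closed, hence exact,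
form `dh`, and replacing `ω₁` by `ω₁'` changes `C` by the coboundary of `g ↦ h x₁ − h (g x₁)`.
-/

section Calculus

variable (F : DiffCalc M V)

lemma ofFun_add (f g : M → ℝ) : (ofFun (f + g) : Form M V 0) = ofFun f + ofFun g := by
  funext x; ext v; simp [ofFun]

lemma ofFun_sub (f g : M → ℝ) : (ofFun (f - g) : Form M V 0) = ofFun f - ofFun g := by
  funext x; ext v; simp [ofFun]

lemma DiffCalc.d_sub {k : ℕ} (α β : Form M V k) : F.d (α - β) = F.d α - F.d β :=
  (AddMonoidHom.mk' F.d F.d_add).map_sub α β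

lemma DiffCalc.smoothForm_sub {k : ℕ} {α β : Form M V k} (hα : F.SmoothForm α)
    (hβ : F.SmoothForm β) : F.SmoothForm (α - β) := by
  rw [sub_eq_add_neg]
  exact F.smoothForm_add hα (F.smoothForm_neg hβ)

lemma DiffCalc.smoothFun_add {f g : M → ℝ} (hf : F.SmoothFun f) (hg : F.SmoothFun g) :
    F.SmoothFun (f + g) :=
  F.smoothFun_of_ofFun <| by
    rw [ofFun_add]
    exact F.smoothForm_add (F.smoothForm_ofFun hf) (F.smoothForm_ofFun hg)

lemma DiffCalc.smoothFun_sub {f g : M → ℝ} (hf : F.SmoothFun f) (hg : F.SmoothFun g) :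
    F.SmoothFun (f - g) :=
  F.smoothFun_of_ofFun <| by
    rw [ofFun_sub]
    exact F.smoothForm_sub (F.smoothForm_ofFun hf) (F.smoothForm_ofFun hg)

lemma DiffCalc.pull_sub {k : ℕ} (g : M → M) (α β : Form M V k) :
    F.pull g (α - β) = F.pull g α - F.pull g β := by
  funext x; ext v; simp [DiffCalc.pull]

lemma DiffCalc.pull_ofFun (g : M → M) (f : M → ℝ) :
    F.pull g (ofFun f : Form M V 0) = ofFun (f ∘ g) := by
  funext x; ext v; simp [DiffCalc.pull, ofFun]

lemma DiffCalc.pull_comp {k : ℕ} {f g : M → M} (hf : F.SmoothMap f) (hg : F.SmoothMap g)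
    (α : Form M V k) : F.pull (f ∘ g) α = F.pull g (F.pull f α) := by
  funext x; ext v; simp [DiffCalc.pull, F.Tmap_comp x hf hg]

lemma DiffCalc.d_ofFun_comp {f : M → ℝ} {g : M → M} (hf : F.SmoothFun f) (hg : F.SmoothMap g) :
    F.d (ofFun (f ∘ g) : Form M V 0) = F.pull g (F.d (ofFun f)) := by
  rw [← F.pull_ofFun]
  exact F.d_pull _ hg (F.smoothForm_ofFun hf)

lemma DiffCalc.sub_eq_sub_of_d_ofFun_eq {f f' : M → ℝ} (hf : F.SmoothFun f)
    (hf' : F.SmoothFun f') (hd : F.d (ofFun f : Form M V 0) = F.d (ofFun f')) (x y : M) :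
    f y - f x = f' y - f' x := by
  have hconst := F.apply_eq_of_d_ofFun_eq_zero (F.smoothFun_sub hf hf')
    (by rw [ofFun_sub, F.d_sub, hd, sub_self]) x y
  simp only [Pi.sub_apply] at hconst
  linarith

/-- The cocycle identity `θ_{g₁g₂} = g₂*θ_{g₁} + θ_{g₂}` of `θ_g = g*θ − θ`, on primitives. -/
lemma DiffCalc.d_ofFun_comp_add {θ : Form M V 1} {g₁ g₂ : M → M} {f₁ f₂ : M → ℝ}
    (hg₁ : F.SmoothMap g₁) (hg₂ : F.SmoothMap g₂) (hf₁ : F.SmoothFun f₁)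
    (hdf₁ : F.d (ofFun f₁) = F.pull g₁ θ - θ) (hdf₂ : F.d (ofFun f₂) = F.pull g₂ θ - θ) :
    F.d (ofFun (f₁ ∘ g₂ + f₂)) = F.pull (g₁ ∘ g₂) θ - θ := by
  rw [ofFun_add, F.d_add, F.d_ofFun_comp hf₁ hg₂, hdf₁, hdf₂, F.pull_sub, F.pull_comp hg₁ hg₂]
  abel

lemma DiffCalc.d_ofFun_comp_sub {θ θ' : Form M V 1} {g : M → M} {h : M → ℝ}
    (hg : F.SmoothMap g) (hh : F.SmoothFun h) (hdh : F.d (ofFun h) = θ - θ') :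
    F.d (ofFun (h ∘ g - h)) = (F.pull g θ - θ) - (F.pull g θ' - θ') := by
  rw [ofFun_sub, F.d_sub, F.d_ofFun_comp hh hg, hdh, F.pull_sub]
  abel

end Calculus

lemma DiffCalc.IsSymplecto.mul {F : DiffCalc M V} {ω : Form M V 2} {g₁ g₂ : Equiv.Perm M}
    (h₁ : F.IsSymplecto ω g₁) (h₂ : F.IsSymplecto ω g₂) : F.IsSymplecto ω (g₁ * g₂) := by
  obtain ⟨hs₁, hs₁', hp₁⟩ := h₁
  obtain ⟨hs₂, hs₂', hp₂⟩ := h₂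
  refine ⟨(F.smoothMap_comp hs₁ hs₂ :), (F.smoothMap_comp hs₂' hs₁' :), ?_⟩
  rw [Equiv.Perm.coe_mul, F.pull_comp hs₁ hs₂, hp₁, hp₂]

section Cocycle

variable (F : DiffCalc M V)

/-- `r = ∫_x^y α` for an exact `1`-form `α`, computed through a smooth primitive. -/
def DiffCalc.HasLineIntegral (α : Form M V 1) (x y : M) (r : ℝ) : Prop :=
  ∃ f : M → ℝ, F.SmoothFun f ∧ F.d (ofFun f) = α ∧ r = f y - f x

/-- `C` is the `2`-cochain `C(g₁, g₂) = ∫_x^{g₂ x} (g₁*θ − θ)` on `S`. -/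
def DiffCalc.IsLineIntegralCocycle (S : Set (Equiv.Perm M)) (θ : Form M V 1) (x : M)
    (C : Equiv.Perm M → Equiv.Perm M → ℝ) : Prop :=
  ∀ g₁ ∈ S, ∀ g₂ ∈ S, F.HasLineIntegral (F.pull g₁ θ - θ) x (g₂ x) (C g₁ g₂)

variable {F}

lemma DiffCalc.HasLineIntegral.eq_sub {α : Form M V 1} {x y : M} {r : ℝ}
    (hr : F.HasLineIntegral α x y r) {f : M → ℝ} (hf : F.SmoothFun f)
    (hdf : F.d (ofFun f) = α) : r = f y - f x := by
  obtain ⟨f', hf', hdf', rfl⟩ := hr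
  exact F.sub_eq_sub_of_d_ofFun_eq hf' hf (hdf'.trans hdf.symm) x y

variable {S : Set (Equiv.Perm M)} {θ : Form M V 1} {C₁ C₂ : Equiv.Perm M → Equiv.Perm M → ℝ}

theorem DiffCalc.IsLineIntegralCocycle.sub_eq_coboundary_of_basepoint {x₁ x₂ : M}
    (hS : ∀ g ∈ S, F.SmoothMap g) (hS_mul : ∀ g₁ ∈ S, ∀ g₂ ∈ S, g₁ * g₂ ∈ S)
    (hC₁ : F.IsLineIntegralCocycle S θ x₁ C₁) (hC₂ : F.IsLineIntegralCocycle S θ x₂ C₂)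
    {a : Equiv.Perm M → ℝ} (ha : ∀ g ∈ S, F.HasLineIntegral (F.pull g θ - θ) x₁ x₂ (a g)) :
    ∀ g₁ ∈ S, ∀ g₂ ∈ S, C₁ g₁ g₂ - C₂ g₁ g₂ = a g₂ - a (g₁ * g₂) + a g₁ := by
  intro g₁ hg₁ g₂ hg₂
  obtain ⟨f₁, hf₁, hdf₁, -⟩ := ha g₁ hg₁
  obtain ⟨f₂, hf₂, hdf₂, -⟩ := ha g₂ hg₂
  have hf₁₂ : F.SmoothFun (f₁ ∘ g₂ + f₂) :=
    F.smoothFun_add (F.smoothFun_comp hf₁ (hS g₂ hg₂)) hf₂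
  have hdf₁₂ := F.d_ofFun_comp_add (hS g₁ hg₁) (hS g₂ hg₂) hf₁ hdf₁ hdf₂
  rw [(hC₁ g₁ hg₁ g₂ hg₂).eq_sub hf₁ hdf₁, (hC₂ g₁ hg₁ g₂ hg₂).eq_sub hf₁ hdf₁,
    (ha g₁ hg₁).eq_sub hf₁ hdf₁, (ha g₂ hg₂).eq_sub hf₂ hdf₂,
    (ha _ (hS_mul g₁ hg₁ g₂ hg₂)).eq_sub hf₁₂ hdf₁₂]
  simp only [Pi.add_apply, Function.comp_apply]
  ring

theorem DiffCalc.IsLineIntegralCocycle.sub_eq_coboundary_of_primitive {θ' : Form M V 1}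
    {x : M} (hS : ∀ g ∈ S, F.SmoothMap g) {h : M → ℝ} (hh : F.SmoothFun h)
    (hdh : F.d (ofFun h) = θ - θ') (hC₁ : F.IsLineIntegralCocycle S θ x C₁)
    (hC₂ : F.IsLineIntegralCocycle S θ' x C₂) :
    ∀ g₁ ∈ S, ∀ g₂ ∈ S, C₁ g₁ g₂ - C₂ g₁ g₂ =
      (h x - h (g₂ x)) - (h x - h ((g₁ * g₂) x)) + (h x - h (g₁ x)) := by
  intro g₁ hg₁ g₂ hg₂
  obtain ⟨f, hf, hdf, hC₂_eq⟩ := hC₂ g₁ hg₁ g₂ hg₂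
  have hf' : F.SmoothFun (f + (h ∘ g₁ - h)) :=
    F.smoothFun_add hf (F.smoothFun_sub (F.smoothFun_comp hh (hS g₁ hg₁)) hh)
  have hdf' : F.d (ofFun (f + (h ∘ g₁ - h))) = F.pull g₁ θ - θ := by
    rw [ofFun_add, F.d_add, hdf, F.d_ofFun_comp_sub (hS g₁ hg₁) hh hdh]
    abel
  rw [(hC₁ g₁ hg₁ g₂ hg₂).eq_sub hf' hdf', hC₂_eq]
  simp only [Pi.add_apply, Pi.sub_apply, Function.comp_apply, Equiv.Perm.coe_mul]
  ring

end Cocycle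

theorem cocycle_class_independent_general
    {M V : Type*} [AddCommGroup V] [Module ℝ V]
    (F : DiffCalc M V)
    (ω : Form M V 2)
    (ω₁ : Form M V 1) (hω₁ : F.SmoothForm ω₁) (hdω₁ : F.d ω₁ = ω)
    (ω₁' : Form M V 1) (hω₁' : F.SmoothForm ω₁') (hdω₁' : F.d ω₁' = ω)
    (hH1 : F.H1Trivial)
    (x₁ x₂ : M)
    -- `C₁` is the cocycle based at `x₁`, `C₂` the one based at `x₂`, both built from `ω₁`;
    -- `C'` is the cocycle based at `x₁` built from the other primitive `ω₁'`.
    (C₁ C₂ C' : Equiv.Perm M → Equiv.Perm M → ℝ)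
    (hC₁ : ∀ g₁ ∈ {g | F.IsSymplecto ω g}, ∀ g₂ ∈ {g | F.IsSymplecto ω g},
      ∃ f : M → ℝ, F.SmoothFun f ∧ F.d (ofFun f) = F.pull g₁ ω₁ - ω₁ ∧
        C₁ g₁ g₂ = f (g₂ x₁) - f x₁)
    (hC₂ : ∀ g₁ ∈ {g | F.IsSymplecto ω g}, ∀ g₂ ∈ {g | F.IsSymplecto ω g},
      ∃ f : M → ℝ, F.SmoothFun f ∧ F.d (ofFun f) = F.pull g₁ ω₁ - ω₁ ∧
        C₂ g₁ g₂ = f (g₂ x₂) - f x₂)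
    (hC' : ∀ g₁ ∈ {g | F.IsSymplecto ω g}, ∀ g₂ ∈ {g | F.IsSymplecto ω g},
      ∃ f : M → ℝ, F.SmoothFun f ∧ F.d (ofFun f) = F.pull g₁ ω₁' - ω₁' ∧
        C' g₁ g₂ = f (g₂ x₁) - f x₁)
    -- the `1`-cochain `a(g) = ∫_{x₁}^{x₂} (g*ω₁ − ω₁)`
    (a : Equiv.Perm M → ℝ)
    (ha : ∀ g ∈ {g | F.IsSymplecto ω g},
      ∃ f : M → ℝ, F.SmoothFun f ∧ F.d (ofFun f) = F.pull g ω₁ - ω₁ ∧ a g = f x₂ - f x₁) :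
    (∀ g₁ ∈ {g | F.IsSymplecto ω g}, ∀ g₂ ∈ {g | F.IsSymplecto ω g},
        C₁ g₁ g₂ - C₂ g₁ g₂ = a g₂ - a (g₁ * g₂) + a g₁) ∧
      (∃ b : Equiv.Perm M → ℝ, ∀ g₁ ∈ {g | F.IsSymplecto ω g}, ∀ g₂ ∈ {g | F.IsSymplecto ω g},
        C₁ g₁ g₂ - C' g₁ g₂ = b g₂ - b (g₁ * g₂) + b g₁) := by
  have hS : ∀ g ∈ {g | F.IsSymplecto ω g}, F.SmoothMap g := fun _ hg => hg.1
  have hS_mul : ∀ g₁ ∈ {g | F.IsSymplecto ω g}, ∀ g₂ ∈ {g | F.IsSymplecto ω g},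
      g₁ * g₂ ∈ {g | F.IsSymplecto ω g} := fun _ hg₁ _ hg₂ => hg₁.mul hg₂
  obtain ⟨h, hh, hdh⟩ := hH1 (ω₁ - ω₁') (F.smoothForm_sub hω₁ hω₁')
    (by rw [F.d_sub, hdω₁, hdω₁', sub_self])
  exact ⟨DiffCalc.IsLineIntegralCocycle.sub_eq_coboundary_of_basepoint hS hS_mul hC₁ hC₂ ha,
    fun g => h x₁ - h (g x₁),
    DiffCalc.IsLineIntegralCocycle.sub_eq_coboundary_of_primitive hS hh hdh hC₁ hC'⟩

/-- Let `(M, ω)` be a non-compact (connected) symplectic manifold with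
`H¹(M,ℝ) = 0` and exact symplectic form `ω`.  The cohomology class in `H²(Diff(M,ω), ℝ)` of
the `2`-cocycle `C_{x₀}(g₁,g₂) = ∫_{x₀}^{g₂x₀}(g₁*ω₁ − ω₁)` does not depend on the base point
`x₀` nor on the choice of the primitive `ω₁` of `ω`.

Explicitly: (1) for two base points `x₁, x₂` one has `C_{x₁} − C_{x₂} = D a`, where `a` is the
`1`-cochain `a(g) = ∫_{x₁}^{x₂}(g*ω₁ − ω₁)` and `(D a)(g₁,g₂) = a(g₂) − a(g₁g₂) + a(g₁)`;
(2) for a second primitive `ω₁'` of `ω` the corresponding cocycle differs from `C_{x₁}` by the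
coboundary of some `1`-cochain.  All line integrals of the exact forms `g*ω₁ − ω₁` are
expressed via primitives (path independence). -/
theorem cocycle_class_independent
    {M V : Type*} [AddCommGroup V] [Module ℝ V]
    [TopologicalSpace M] [NoncompactSpace M]
    (F : DiffCalc M V)
    (ω : Form M V 2) (hω : F.SmoothForm ω) (hnd : Nondegenerate ω)
    (ω₁ : Form M V 1) (hω₁ : F.SmoothForm ω₁) (hdω₁ : F.d ω₁ = ω)
    (ω₁' : Form M V 1) (hω₁' : F.SmoothForm ω₁') (hdω₁' : F.d ω₁' = ω)
    (hH1 : F.H1Trivial)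
    (x₁ x₂ : M)
    -- `C₁` is the cocycle based at `x₁`, `C₂` the one based at `x₂`, both built from `ω₁`;
    -- `C'` is the cocycle based at `x₁` built from the other primitive `ω₁'`.
    (C₁ C₂ C' : Equiv.Perm M → Equiv.Perm M → ℝ)
    (hC₁ : ∀ g₁ ∈ {g | F.IsSymplecto ω g}, ∀ g₂ ∈ {g | F.IsSymplecto ω g},
      ∃ f : M → ℝ, F.SmoothFun f ∧ F.d (ofFun f) = F.pull g₁ ω₁ - ω₁ ∧
        C₁ g₁ g₂ = f (g₂ x₁) - f x₁)
    (hC₂ : ∀ g₁ ∈ {g | F.IsSymplecto ω g}, ∀ g₂ ∈ {g | F.IsSymplecto ω g},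
      ∃ f : M → ℝ, F.SmoothFun f ∧ F.d (ofFun f) = F.pull g₁ ω₁ - ω₁ ∧
        C₂ g₁ g₂ = f (g₂ x₂) - f x₂)
    (hC' : ∀ g₁ ∈ {g | F.IsSymplecto ω g}, ∀ g₂ ∈ {g | F.IsSymplecto ω g},
      ∃ f : M → ℝ, F.SmoothFun f ∧ F.d (ofFun f) = F.pull g₁ ω₁' - ω₁' ∧
        C' g₁ g₂ = f (g₂ x₁) - f x₁)
    -- the `1`-cochain `a(g) = ∫_{x₁}^{x₂} (g*ω₁ − ω₁)`
    (a : Equiv.Perm M → ℝ)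
    (ha : ∀ g ∈ {g | F.IsSymplecto ω g},
      ∃ f : M → ℝ, F.SmoothFun f ∧ F.d (ofFun f) = F.pull g ω₁ - ω₁ ∧ a g = f x₂ - f x₁) :
    (∀ g₁ ∈ {g | F.IsSymplecto ω g}, ∀ g₂ ∈ {g | F.IsSymplecto ω g},
        C₁ g₁ g₂ - C₂ g₁ g₂ = a g₂ - a (g₁ * g₂) + a g₁) ∧
      (∃ b : Equiv.Perm M → ℝ, ∀ g₁ ∈ {g | F.IsSymplecto ω g}, ∀ g₂ ∈ {g | F.IsSymplecto ω g},
        C₁ g₁ g₂ - C' g₁ g₂ = b g₂ - b (g₁ * g₂) + b g₁) :=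
  cocycle_class_independent_general F ω ω₁ hω₁ hdω₁ ω₁' hω₁' hdω₁' hH1 x₁ x₂ C₁ C₂ C' hC₁ hC₂ hC' a
    ha

end SymplCocycle
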